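/- (Theorem 2.3, symmetry of weighted (h,q)-Genocchi polynomials) Let q be a real number with 0 < q < 1, let α > 0 be real, let h be a positive integer, let x ≥ 0 be real, let a and b be odd positive integers, and let m be a positive integer. Then [2]_{q^b} · [a]_{q^α}^{m-1} · ∑_{i=0}^{a-1} (-1)^i q^{ibh} G̃_{m,q^a}^{(α,h)}(bx + bi/a) = [2]_{q^a} · [b]_{q^α}^{m-1} · ∑_{i=0}^{b-1} (-1)^i q^{iah} G̃_{m,q^b}^{(α,h)}(ax + ai/b). -/

import Mathlib

/-- The `q`-number `[x]_q = (1 - q^x)/(1 - q)` (real exponent, via `rpow`). -/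
noncomputable def qnum (q x : ℝ) : ℝ := (1 - q ^ x) / (1 - q)

/-- The weighted `(h,q)`-Genocchi polynomial
`G̃_{n,q}^{(α,h)}(x) = n·[2]_q·∑_{m≥0} (-1)^m q^{mh} [m+x]_{q^α}^{n-1}`
(for `n = 0` the prefactor `n` makes it `0`). -/
noncomputable def hqGenocchi (q α : ℝ) (h n : ℕ) (x : ℝ) : ℝ :=
  (n : ℝ) * qnum q 2 *
    ∑' m : ℕ, (-1 : ℝ) ^ m * q ^ (m * h) * (qnum (q ^ α) ((m : ℝ) + x)) ^ (n - 1)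

/-!
Substituting `n = j + b l` (`j < b`) in the series defining `G̃_{m,q^a}(bx + bi/a)` and using
`[a]_Q [t]_{Q^a} = [a t]_Q` turns the left-hand side into `m [2]_{q^a} [2]_{q^b}` times the
triple sum over `i < a`, `j < b`, `l ≥ 0` of
`(-1)^{i+j+l} q^{(aj + bi + abl)h} [aj + bi + abl + abx]_{q^α}^{m-1}`;
the oddness of `b` gives `(-1)^{bl} = (-1)^l`. The triple sum is symmetric in `a` and `b`.
-/

open Finset

lemma qnum_mul_qnum_rpow {Q : ℝ} (hQ : 0 ≤ Q) (c y : ℝ) :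
    qnum Q c * qnum (Q ^ c) y = qnum Q (c * y) := by
  by_cases hc : Q ^ c = 1
  · simp [qnum, Real.rpow_mul hQ, hc]
  have hQ1 : Q ≠ 1 := by rintro rfl; simp at hc
  have h1 : (1 : ℝ) - Q ≠ 0 := sub_ne_zero.2 (Ne.symm hQ1)
  have h2 : (1 : ℝ) - Q ^ c ≠ 0 := sub_ne_zero.2 (Ne.symm hc)
  unfold qnum
  rw [Real.rpow_mul hQ]
  field_simp

lemma abs_qnum_le {Q : ℝ} (hQ0 : 0 < Q) (hQ1 : Q < 1) {t₀ t : ℝ} (ht : t₀ ≤ t) :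
    |qnum Q t| ≤ (1 + Q ^ t₀) / (1 - Q) := by
  rw [qnum, abs_div, abs_of_pos (sub_pos.2 hQ1)]
  gcongr
  calc |1 - Q ^ t| ≤ |1| + |Q ^ t| := abs_sub _ _
    _ = 1 + Q ^ t := by rw [abs_one, abs_of_pos (Real.rpow_pos_of_pos hQ0 t)]
    _ ≤ 1 + Q ^ t₀ := by
      linarith [Real.rpow_le_rpow_of_exponent_ge hQ0 hQ1.le ht]

lemma summable_hqGenocchi_series {q α : ℝ} (hq0 : 0 < q) (hq1 : q < 1) (hα : 0 < α)
    {h : ℕ} (hh : 0 < h) (k : ℕ) (y : ℝ) :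
    Summable fun n : ℕ => (-1 : ℝ) ^ n * q ^ (n * h) * qnum (q ^ α) (n + y) ^ k := by
  have hQ0 : 0 < q ^ α := Real.rpow_pos_of_pos hq0 α
  have hQ1 : q ^ α < 1 := Real.rpow_lt_one hq0.le hq1 hα
  refine Summable.of_norm_bounded ((summable_geometric_of_lt_one (pow_nonneg hq0.le h)
    (pow_lt_one₀ hq0.le hq1 hh.ne')).mul_left (((1 + (q ^ α) ^ y) / (1 - q ^ α)) ^ k)) ?_
  intro n
  have hn : y ≤ n + y := le_add_of_nonneg_left n.cast_nonneg
  simp only [norm_mul, norm_pow, norm_neg, norm_one, one_pow, one_mul,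
    Real.norm_of_nonneg hq0.le, Real.norm_eq_abs]
  rw [mul_comm n h, pow_mul, mul_comm]
  gcongr
  exact abs_qnum_le hQ0 hQ1 hn

lemma tsum_eq_sum_range_tsum_add_mul {R : Type*} [AddCommGroup R] [UniformSpace R]
    [IsUniformAddGroup R] [CompleteSpace R] [T0Space R] {f : ℕ → R} (hf : Summable f)
    {N : ℕ} (hN : 0 < N) :
    ∑' n, f n = ∑ j ∈ range N, ∑' l, f (j + N * l) := by
  obtain ⟨k, rfl⟩ := Nat.exists_eq_succ_of_ne_zero hN.ne'
  rw [Nat.sumByResidueClasses hf (k + 1)]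
  exact Fin.sum_univ_eq_sum_range (fun j => ∑' l, f (j + (k + 1) * l)) (k + 1)

noncomputable def hqGenocchiTripleSum (q α x : ℝ) (h m a b : ℕ) : ℝ :=
  ∑ i ∈ range a, ∑ j ∈ range b, ∑' l : ℕ,
    (-1 : ℝ) ^ (i + j + l) * q ^ ((a * j + b * i + a * b * l) * h) *
      qnum (q ^ α) (a * j + b * i + a * b * l + a * b * x) ^ (m - 1)

lemma hqGenocchiTripleSum_comm (q α x : ℝ) (h m a b : ℕ) :
    hqGenocchiTripleSum q α x h m a b = hqGenocchiTripleSum q α x h m b a := by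
  rw [hqGenocchiTripleSum, hqGenocchiTripleSum, sum_comm]
  refine sum_congr rfl fun j _ => sum_congr rfl fun i _ => tsum_congr fun l => ?_
  ring_nf

section

variable {q α : ℝ} (x : ℝ) {h : ℕ} {a b : ℕ} (m : ℕ)

lemma neg_one_pow_mul_qnum_pow_mul_hqGenocchi (hq0 : 0 < q) (hq1 : q < 1) (hα : 0 < α)
    (hh : 0 < h) (ha : 0 < a) (hbo : Odd b) (i : ℕ) :
    (-1 : ℝ) ^ i * q ^ (i * b * h) * qnum (q ^ α) a ^ (m - 1) *
        hqGenocchi (q ^ a) α h m (b * x + b * i / a) =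
      m * qnum (q ^ a) 2 * ∑ j ∈ range b, ∑' l : ℕ,
        (-1 : ℝ) ^ (i + j + l) * q ^ ((a * j + b * i + a * b * l) * h) *
          qnum (q ^ α) (a * j + b * i + a * b * l + a * b * x) ^ (m - 1) := by
  set C := (-1 : ℝ) ^ i * q ^ (i * b * h) * qnum (q ^ α) a ^ (m - 1)
  set y : ℝ := b * x + b * i / a
  have hqa : (q ^ a) ^ α = (q ^ α) ^ (a : ℝ) := by
    rw [← Real.rpow_natCast_mul hq0.le, ← Real.rpow_mul hq0.le, mul_comm]
  have hterm : ∀ j l : ℕ,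
      C * ((-1 : ℝ) ^ (j + b * l) * (q ^ a) ^ ((j + b * l) * h) *
        qnum ((q ^ a) ^ α) ((j + b * l : ℕ) + y) ^ (m - 1)) =
      (-1 : ℝ) ^ (i + j + l) * q ^ ((a * j + b * i + a * b * l) * h) *
        qnum (q ^ α) (a * j + b * i + a * b * l + a * b * x) ^ (m - 1) := by
    intro j l
    have hsign : (-1 : ℝ) ^ (i + j + l) = (-1) ^ i * (-1) ^ (j + b * l) := by
      rw [← pow_add, pow_add, pow_add, pow_add, pow_add, pow_mul, hbo.neg_one_pow]
      ring
    have hpow : q ^ ((a * j + b * i + a * b * l) * h) =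
        q ^ (i * b * h) * (q ^ a) ^ ((j + b * l) * h) := by
      rw [← pow_mul, ← pow_add]; ring_nf
    have harg : (a * j + b * i + a * b * l + a * b * x : ℝ) = a * ((j + b * l : ℕ) + y) := by
      simp only [y]; push_cast; field_simp; ring
    rw [hsign, hpow, harg, ← qnum_mul_qnum_rpow (Real.rpow_pos_of_pos hq0 α).le, mul_pow,
      ← hqa]
    ring
  have hsum : Summable fun n : ℕ =>
      C * ((-1 : ℝ) ^ n * (q ^ a) ^ (n * h) * qnum ((q ^ a) ^ α) (n + y) ^ (m - 1)) :=
    (summable_hqGenocchi_series (pow_pos hq0 a) (pow_lt_one₀ hq0.le hq1 ha.ne') hα hh _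
      y).mul_left C
  rw [hqGenocchi, mul_left_comm, ← tsum_mul_left, tsum_eq_sum_range_tsum_add_mul hsum hbo.pos]
  simp only [hterm]

lemma qnum_pow_mul_sum_hqGenocchi (hq0 : 0 < q) (hq1 : q < 1) (hα : 0 < α) (hh : 0 < h)
    (ha : 0 < a) (hbo : Odd b) :
    qnum (q ^ α) a ^ (m - 1) *
        ∑ i ∈ range a, (-1 : ℝ) ^ i * q ^ (i * b * h) *
          hqGenocchi (q ^ a) α h m (b * x + b * i / a) =
      m * qnum (q ^ a) 2 * hqGenocchiTripleSum q α x h m a b := by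
  rw [hqGenocchiTripleSum, mul_sum, mul_sum]
  refine sum_congr rfl fun i _ => ?_
  rw [← neg_one_pow_mul_qnum_pow_mul_hqGenocchi x m hq0 hq1 hα hh ha hbo i]
  ring

end

theorem stmt5_general (q α x : ℝ) (hq0 : 0 < q) (hq1 : q < 1) (hα : 0 < α) (h : ℕ) (hh : 0 < h)
    (a b : ℕ) (hao : Odd a) (hbo : Odd b)
    (m : ℕ) :
    qnum (q ^ b) 2 * (qnum (q ^ α) (a : ℝ)) ^ (m - 1) *
        ∑ i ∈ Finset.range a, (-1 : ℝ) ^ i * q ^ (i * b * h) *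
          hqGenocchi (q ^ a) α h m ((b : ℝ) * x + (b : ℝ) * (i : ℝ) / (a : ℝ)) =
      qnum (q ^ a) 2 * (qnum (q ^ α) (b : ℝ)) ^ (m - 1) *
        ∑ i ∈ Finset.range b, (-1 : ℝ) ^ i * q ^ (i * a * h) *
          hqGenocchi (q ^ b) α h m ((a : ℝ) * x + (a : ℝ) * (i : ℝ) / (b : ℝ)) := by
  rw [mul_assoc, qnum_pow_mul_sum_hqGenocchi x m hq0 hq1 hα hh hao.pos hbo, mul_assoc (qnum _ 2),
    qnum_pow_mul_sum_hqGenocchi x m hq0 hq1 hα hh hbo.pos hao, hqGenocchiTripleSum_comm]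
  ring

theorem stmt5 (q α x : ℝ) (hq0 : 0 < q) (hq1 : q < 1) (hα : 0 < α) (h : ℕ) (hh : 0 < h)
    (hx : 0 ≤ x) (a b : ℕ) (ha : 0 < a) (hb : 0 < b) (hao : Odd a) (hbo : Odd b)
    (m : ℕ) (hm : 0 < m) :
    qnum (q ^ b) 2 * (qnum (q ^ α) (a : ℝ)) ^ (m - 1) *
        ∑ i ∈ Finset.range a, (-1 : ℝ) ^ i * q ^ (i * b * h) *
          hqGenocchi (q ^ a) α h m ((b : ℝ) * x + (b : ℝ) * (i : ℝ) / (a : ℝ)) =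
      qnum (q ^ a) 2 * (qnum (q ^ α) (b : ℝ)) ^ (m - 1) *
        ∑ i ∈ Finset.range b, (-1 : ℝ) ^ i * q ^ (i * a * h) *
          hqGenocchi (q ^ b) α h m ((a : ℝ) * x + (a : ℝ) * (i : ℝ) / (b : ℝ)) :=
  stmt5_general q α x hq0 hq1 hα h hh a b hao hbo m
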